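/- The quaternion matrix nuclear norm is well defined: if Q ∈ ℍ^{N₁×N₂} has two QSVDs Q = U Λ Vᴴ = U' Λ' V'ᴴ, then the sums of the diagonal entries of Λ and of Λ' coincide, and both equal ½ Σ_j sqrt(λ_j), where λ_j runs over the eigenvalues (with multiplicity) of the Hermitian positive semidefinite complex matrix f(Q)ᴴ f(Q). -/

import Mathlib

/-!
The complex representation `f` is multiplicative and commutes with `ᴴ`, so a QSVD `Q = U Λ Vᴴ`
gives `f(Q)ᴴ f(Q) = f(V) (f(Λ)ᴴ f(Λ)) f(V)ᴴ` with `f(V)` unitary. As `f(Λ) = diag(Λ, Λ)` and `Λ`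
is rectangular diagonal with entries `σₙ ≥ 0`, `f(Λ)ᴴ f(Λ)` is diagonal and lists every `σₙ²`
twice. Hence the eigenvalues of `f(Q)ᴴ f(Q)` are the `σₙ²`, each twice, and
`½ Σⱼ √λⱼ = Σₙ σₙ`, a quantity that depends on `Q` alone.
-/

open Matrix

noncomputable section

/-- The two complex components of the Cayley–Dickson form of a quaternion. -/
def qC1 (q : Quaternion ℝ) : ℂ := ⟨q.re, q.imI⟩
def qC2 (q : Quaternion ℝ) : ℂ := ⟨q.imJ, q.imK⟩

/-- The isomorphic complex representation `f` of a quaternion matrix: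
`f(Q) = [[Z₁, Z₂], [−Z₂*, Z₁*]]` with `Z₁ = Q₀ + Q₁ i`, `Z₂ = Q₂ + Q₃ i`. -/
def qf {N₁ N₂ : ℕ} (Q : Matrix (Fin N₁) (Fin N₂) (Quaternion ℝ)) :
    Matrix (Fin N₁ ⊕ Fin N₁) (Fin N₂ ⊕ Fin N₂) ℂ :=
  Matrix.fromBlocks (Matrix.of fun m n => qC1 (Q m n)) (Matrix.of fun m n => qC2 (Q m n))
    (Matrix.of fun m n => -star (qC2 (Q m n))) (Matrix.of fun m n => star (qC1 (Q m n)))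

/-- A square quaternion matrix is unitary if `U Uᴴ = Uᴴ U = I`. -/
def qUnitary {N : ℕ} (U : Matrix (Fin N) (Fin N) (Quaternion ℝ)) : Prop :=
  U * Uᴴ = 1 ∧ Uᴴ * U = 1

/-- A rectangular real matrix is "rectangular diagonal with nonnegative diagonal entries". -/
def recDiagNonneg {N₁ N₂ : ℕ} (Λ : Matrix (Fin N₁) (Fin N₂) ℝ) : Prop :=
  (∀ (m : Fin N₁) (n : Fin N₂), (m : ℕ) ≠ (n : ℕ) → Λ m n = 0) ∧ ∀ m n, 0 ≤ Λ m n

/-- View a real matrix as a quaternion matrix. -/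
def rToQ {N₁ N₂ : ℕ} (Λ : Matrix (Fin N₁) (Fin N₂) ℝ) :
    Matrix (Fin N₁) (Fin N₂) (Quaternion ℝ) :=
  Λ.map (algebraMap ℝ (Quaternion ℝ))

/-- `IsQSVD Q U Λ V` : `Q = U Λ Vᴴ` is a quaternion singular value decomposition. -/
def IsQSVD {N₁ N₂ : ℕ} (Q : Matrix (Fin N₁) (Fin N₂) (Quaternion ℝ))
    (U : Matrix (Fin N₁) (Fin N₁) (Quaternion ℝ))
    (Λ : Matrix (Fin N₁) (Fin N₂) ℝ)
    (V : Matrix (Fin N₂) (Fin N₂) (Quaternion ℝ)) : Prop :=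
  qUnitary U ∧ qUnitary V ∧ recDiagNonneg Λ ∧ Q = U * rToQ Λ * Vᴴ

/-- The quaternion nuclear norm: `½ Σ_j sqrt(λ_j)`, `λ_j` the eigenvalues of `f(X)ᴴ f(X)`. -/
noncomputable def qNuclearNorm {N₁ N₂ : ℕ}
    (X : Matrix (Fin N₁) (Fin N₂) (Quaternion ℝ)) : ℝ :=
  (1 / 2) * ∑ j, Real.sqrt ((Matrix.isHermitian_conjTranspose_mul_self (qf X)).eigenvalues j)

/-- The quaternion Frobenius norm. -/
noncomputable def qFrob {M N : ℕ} (X : Matrix (Fin M) (Fin N) (Quaternion ℝ)) : ℝ :=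
  Real.sqrt (∑ m, ∑ n, ‖X m n‖ ^ 2)

/-- The spectral norm of a quaternion matrix: the square root of the largest eigenvalue
of `f(E)ᴴ f(E)`. -/
noncomputable def qSpectralNorm {N₁ N₂ : ℕ}
    (E : Matrix (Fin N₁) (Fin N₂) (Quaternion ℝ)) : ℝ :=
  ⨆ j, Real.sqrt ((Matrix.isHermitian_conjTranspose_mul_self (qf E)).eigenvalues j)

open Polynomial in
theorem Matrix.IsHermitian.eigenvalues_multiset_eq_of_conj_diagonal {n 𝕜 : Type*} [Fintype n]
    [DecidableEq n] [RCLike 𝕜] {A W : Matrix n n 𝕜} (hA : A.IsHermitian) {d : n → ℝ}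
    (hW : Wᴴ * W = 1) (hAd : A = W * diagonal (fun i => (d i : 𝕜)) * Wᴴ) :
    Finset.univ.val.map hA.eigenvalues = Finset.univ.val.map d := by
  have hcharpoly : A.charpoly = ∏ i, (X - C (d i : 𝕜)) := by
    rw [hAd, charpoly_mul_comm, ← Matrix.mul_assoc, hW, Matrix.one_mul, charpoly_diagonal]
  have hroots : (∏ i, (X - C (d i : 𝕜))).roots = Finset.univ.val.map (fun i => (d i : 𝕜)) := by
    simpa [Multiset.map_map, Function.comp_def] using
      roots_multiset_prod_X_sub_C (Finset.univ.val.map fun i => (d i : 𝕜))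
  apply Multiset.map_injective (RCLike.ofReal_injective (K := 𝕜))
  rw [Multiset.map_map, Multiset.map_map, ← hA.roots_charpoly_eq_eigenvalues, hcharpoly, hroots]
  rfl

theorem Matrix.IsHermitian.sum_comp_eigenvalues_eq_of_conj_diagonal {n 𝕜 : Type*} [Fintype n]
    [DecidableEq n] [RCLike 𝕜] {A W : Matrix n n 𝕜} (hA : A.IsHermitian) {d : n → ℝ}
    (hW : Wᴴ * W = 1) (hAd : A = W * diagonal (fun i => (d i : 𝕜)) * Wᴴ) (g : ℝ → ℝ) :
    ∑ i, g (hA.eigenvalues i) = ∑ i, g (d i) := by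
  have h := congrArg (fun s => (s.map g).sum) (hA.eigenvalues_multiset_eq_of_conj_diagonal hW hAd)
  simp only [Multiset.map_map] at h
  exact h

section ComplexRepresentation

lemma qC1_mul (p q : Quaternion ℝ) : qC1 (p * q) = qC1 p * qC1 q - qC2 p * star (qC2 q) := by
  apply Complex.ext <;>
    simp [qC1, qC2, Quaternion.re_mul, Quaternion.imI_mul] <;> ring

lemma qC2_mul (p q : Quaternion ℝ) : qC2 (p * q) = qC1 p * qC2 q + qC2 p * star (qC1 q) := by
  apply Complex.ext <;>
    simp [qC1, qC2, Quaternion.imJ_mul, Quaternion.imK_mul] <;> ring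

lemma qC1_star (q : Quaternion ℝ) : qC1 (star q) = star (qC1 q) := by
  apply Complex.ext <;> simp [qC1]

lemma qC2_star (q : Quaternion ℝ) : qC2 (star q) = -qC2 q := by
  apply Complex.ext <;> simp [qC2]

lemma qC1_coe (r : ℝ) : qC1 r = r := by
  apply Complex.ext <;> simp [qC1]

lemma qC2_coe (r : ℝ) : qC2 r = 0 := by
  apply Complex.ext <;> simp [qC2]

lemma qC1_sum {ι : Type*} (s : Finset ι) (q : ι → Quaternion ℝ) :
    qC1 (∑ i ∈ s, q i) = ∑ i ∈ s, qC1 (q i) :=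
  map_sum (AddMonoidHom.mk' qC1 fun p q => by apply Complex.ext <;> simp [qC1]) q s

lemma qC2_sum {ι : Type*} (s : Finset ι) (q : ι → Quaternion ℝ) :
    qC2 (∑ i ∈ s, q i) = ∑ i ∈ s, qC2 (q i) :=
  map_sum (AddMonoidHom.mk' qC2 fun p q => by apply Complex.ext <;> simp [qC2]) q s

variable {N₁ N₂ N₃ : ℕ}

lemma qf_mul (A : Matrix (Fin N₁) (Fin N₂) (Quaternion ℝ))
    (B : Matrix (Fin N₂) (Fin N₃) (Quaternion ℝ)) : qf (A * B) = qf A * qf B := by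
  simp only [qf, fromBlocks_multiply, fromBlocks_inj]
  refine ⟨?_, ?_, ?_, ?_⟩ <;> ext m n <;>
    simp only [of_apply, Matrix.add_apply, mul_apply, qC1_sum, qC2_sum, star_sum,
      ← Finset.sum_add_distrib, ← Finset.sum_neg_distrib] <;>
    refine Finset.sum_congr rfl fun _ _ => ?_ <;>
    simp only [qC1_mul, qC2_mul, star_add, star_sub, star_mul', star_star] <;> ring

lemma qf_conjTranspose (A : Matrix (Fin N₁) (Fin N₂) (Quaternion ℝ)) :
    qf Aᴴ = (qf A)ᴴ := by
  ext (i | i) (j | j) <;> simp [qf, qC1_star, qC2_star]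

lemma qf_rToQ (Λ : Matrix (Fin N₁) (Fin N₂) ℝ) :
    qf (rToQ Λ) = fromBlocks (Λ.map (↑)) 0 0 (Λ.map (↑)) := by
  ext (i | i) (j | j) <;> simp [qf, rToQ, qC1_coe, qC2_coe]

lemma qf_one : qf (1 : Matrix (Fin N₁) (Fin N₁) (Quaternion ℝ)) = 1 := by
  rw [← Matrix.map_one _ (map_zero (algebraMap ℝ (Quaternion ℝ))) (map_one _), ← rToQ, qf_rToQ,
    Matrix.map_one _ Complex.ofReal_zero Complex.ofReal_one, fromBlocks_one]

lemma qf_conjTranspose_mul_self_eq_one {U : Matrix (Fin N₁) (Fin N₁) (Quaternion ℝ)}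
    (hU : Uᴴ * U = 1) : (qf U)ᴴ * qf U = 1 := by
  rw [← qf_conjTranspose, ← qf_mul, hU, qf_one]

end ComplexRepresentation

theorem Finset.sq_sum_eq_sum_sq_of_pairwise_mul_eq_zero {ι R : Type*} [Semiring R]
    (s : Finset ι) (f : ι → R) (hf : (s : Set ι).Pairwise fun i j => f i * f j = 0) :
    (∑ i ∈ s, f i) ^ 2 = ∑ i ∈ s, f i ^ 2 := by
  rw [sq, Finset.sum_mul_sum]
  refine Finset.sum_congr rfl fun i hi => ?_
  rw [Finset.sum_eq_single_of_mem i hi fun j hj hji => hf hi hj hji.symm, sq]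

section RectangularDiagonal

variable {N₁ N₂ : ℕ}

/-- The `n`-th diagonal entry of a rectangular diagonal matrix, read off as a column sum
(so that it is `0` when `N₁ ≤ n`). -/
def diagEntry (Λ : Matrix (Fin N₁) (Fin N₂) ℝ) (n : Fin N₂) : ℝ := ∑ m, Λ m n

def diagEntrySqTwice (Λ : Matrix (Fin N₁) (Fin N₂) ℝ) : Fin N₂ ⊕ Fin N₂ → ℝ :=
  Sum.elim (fun n => diagEntry Λ n ^ 2) (fun n => diagEntry Λ n ^ 2)

variable {Λ : Matrix (Fin N₁) (Fin N₂) ℝ}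
  (hΛ : ∀ (m : Fin N₁) (n : Fin N₂), (m : ℕ) ≠ (n : ℕ) → Λ m n = 0)
include hΛ

lemma sum_diag_eq_sum_diagEntry :
    (∑ m : Fin N₁, ∑ n : Fin N₂, if (m : ℕ) = (n : ℕ) then Λ m n else 0) = ∑ n, diagEntry Λ n := by
  rw [Finset.sum_comm]
  refine Finset.sum_congr rfl fun n _ => Finset.sum_congr rfl fun m _ => ?_
  split_ifs with h
  · rfl
  · exact (hΛ m n h).symm

lemma mul_entry_eq_zero_of_not_diag {m m' : Fin N₁} {n n' : Fin N₂}
    (h : ¬((m : ℕ) = n ∧ (m' : ℕ) = n')) : Λ m n * Λ m' n' = 0 := by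
  rcases not_and_or.1 h with h | h
  · rw [hΛ m n h, zero_mul]
  · rw [hΛ m' n' h, mul_zero]

lemma transpose_mul_self_eq_diagonal_diagEntry :
    Λᵀ * Λ = diagonal fun n => diagEntry Λ n ^ 2 := by
  ext n n'
  rw [mul_apply, diagonal_apply]
  split_ifs with hnn'
  · subst hnn'
    simp only [transpose_apply, ← sq]
    refine (Finset.sq_sum_eq_sum_sq_of_pairwise_mul_eq_zero _ (Λ · n) fun m _ m' _ hmm' => ?_).symm
    exact mul_entry_eq_zero_of_not_diag hΛ fun h => hmm' (Fin.ext (h.1.trans h.2.symm))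
  · refine Finset.sum_eq_zero fun m _ => mul_entry_eq_zero_of_not_diag hΛ fun h => ?_
    exact hnn' (Fin.ext (h.1.symm.trans h.2))

lemma qf_rToQ_conjTranspose_mul_self :
    (qf (rToQ Λ))ᴴ * qf (rToQ Λ) = diagonal fun i => (diagEntrySqTwice Λ i : ℂ) := by
  have hblock := congrArg (Matrix.map · Complex.ofRealHom)
    (transpose_mul_self_eq_diagonal_diagEntry hΛ)
  simp only [Matrix.map_mul, diagonal_map (map_zero _)] at hblock
  rw [qf_rToQ, fromBlocks_conjTranspose, fromBlocks_multiply]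
  simp only [conjTranspose_zero, Matrix.mul_zero, Matrix.zero_mul, add_zero, zero_add]
  rw [← conjTranspose_map _ fun _ => (Complex.conj_ofReal _).symm,
    conjTranspose_eq_transpose_of_trivial]
  erw [hblock, fromBlocks_diagonal]
  congr 1
  ext (i | i) <;> rfl

end RectangularDiagonal

section QSVD

variable {N₁ N₂ : ℕ} {Q : Matrix (Fin N₁) (Fin N₂) (Quaternion ℝ)}
  {U : Matrix (Fin N₁) (Fin N₁) (Quaternion ℝ)} {Λ : Matrix (Fin N₁) (Fin N₂) ℝ}
  {V : Matrix (Fin N₂) (Fin N₂) (Quaternion ℝ)}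

lemma IsQSVD.qf_conjTranspose_mul_self_eq (h : IsQSVD Q U Λ V) :
    (qf Q)ᴴ * qf Q = qf V * diagonal (fun i => (diagEntrySqTwice Λ i : ℂ)) * (qf V)ᴴ := by
  obtain ⟨⟨-, hU⟩, -, ⟨hΛ, -⟩, rfl⟩ := h
  rw [← qf_rToQ_conjTranspose_mul_self hΛ, qf_mul, qf_mul, qf_conjTranspose]
  simp only [conjTranspose_mul, conjTranspose_conjTranspose, Matrix.mul_assoc]
  rw [← Matrix.mul_assoc (qf U)ᴴ, qf_conjTranspose_mul_self_eq_one hU, Matrix.one_mul]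

lemma IsQSVD.sum_diag_eq_qNuclearNorm (h : IsQSVD Q U Λ V) :
    (∑ m : Fin N₁, ∑ n : Fin N₂, if (m : ℕ) = (n : ℕ) then Λ m n else 0) = qNuclearNorm Q := by
  have hQ := h.qf_conjTranspose_mul_self_eq
  obtain ⟨-, ⟨-, hV⟩, ⟨hΛ, hΛ_nonneg⟩, -⟩ := h
  have hdiagEntry_nonneg (n : Fin N₂) : 0 ≤ diagEntry Λ n :=
    Finset.sum_nonneg fun m _ => hΛ_nonneg m n
  rw [qNuclearNorm,
    (isHermitian_conjTranspose_mul_self _).sum_comp_eigenvalues_eq_of_conj_diagonal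
      (qf_conjTranspose_mul_self_eq_one hV) hQ,
    sum_diag_eq_sum_diagEntry hΛ, Fintype.sum_sum_type]
  simp only [Real.sqrt_sq (hdiagEntry_nonneg _)]
  ring

end QSVD

/-- the quaternion nuclear norm is well defined: any two QSVDs of `Q` have the
same sum of diagonal entries of `Λ`, and this sum equals `½ Σ_j sqrt(λ_j)` where `λ_j` runs
over the eigenvalues of `f(Q)ᴴ f(Q)`. -/
theorem qNuclearNorm_well_defined {N₁ N₂ : ℕ} (Q : Matrix (Fin N₁) (Fin N₂) (Quaternion ℝ))
    (U U' : Matrix (Fin N₁) (Fin N₁) (Quaternion ℝ))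
    (Λ Λ' : Matrix (Fin N₁) (Fin N₂) ℝ)
    (V V' : Matrix (Fin N₂) (Fin N₂) (Quaternion ℝ))
    (h : IsQSVD Q U Λ V) (h' : IsQSVD Q U' Λ' V') :
    (∑ m : Fin N₁, ∑ n : Fin N₂, if (m : ℕ) = (n : ℕ) then Λ m n else 0) =
      (∑ m : Fin N₁, ∑ n : Fin N₂, if (m : ℕ) = (n : ℕ) then Λ' m n else 0) ∧
    (∑ m : Fin N₁, ∑ n : Fin N₂, if (m : ℕ) = (n : ℕ) then Λ m n else 0) =
      qNuclearNorm Q :=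
  ⟨h.sum_diag_eq_qNuclearNorm.trans h'.sum_diag_eq_qNuclearNorm.symm, h.sum_diag_eq_qNuclearNorm⟩
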